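/- arXiv:2603.09501 — 2 statements merged into one kernel-verified Lean document; each statement's English description precedes it below -/
import Mathlib

section
/- Let S ∈ Z[X], let M = max over all Boolean assignments φ of |φ(S)|, and let m₁, …, m_k ≥ 2 be pairwise coprime integers with m₁·…·m_k > M. Let G ⊆ Z[X] be a set of polynomials each of which evaluates to an element of {-1,0,1} under every Boolean assignment. Then every Boolean model of G over Z satisfies φ(S) = 0 in Z if and only if, for each i ∈ {1,…,k}, every Boolean model of G modulo m_i satisfies φ(S) ≡ 0 (mod m_i). -/
open MvPolynomial

theorem stmt_3 {σ : Type*} (S : MvPolynomial σ ℤ)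
    (k : ℕ) (m : Fin k → ℤ) (hm : ∀ i, 2 ≤ m i)
    (hcop : ∀ i j, i ≠ j → IsCoprime (m i) (m j))
    (hbound : ∀ φ : σ → ℤ, (∀ x, φ x = 0 ∨ φ x = 1) →
      |eval φ S| < ∏ i, m i)
    (G : Set (MvPolynomial σ ℤ))
    (hG : ∀ g ∈ G, ∀ ψ : σ → ℤ, (∀ x, ψ x = 0 ∨ ψ x = 1) →
      eval ψ g ∈ ({-1, 0, 1} : Set ℤ)) :
    (∀ φ : σ → ℤ, (∀ x, φ x = 0 ∨ φ x = 1) →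
        (∀ g ∈ G, eval φ g = 0) → eval φ S = 0) ↔
    (∀ i : Fin k, ∀ φ : σ → ℤ, (∀ x, φ x = 0 ∨ φ x = 1) →
        (∀ g ∈ G, m i ∣ eval φ g) → m i ∣ eval φ S) := by
  constructor
  · intro h i φ hφ hg
    have : eval φ S = 0 := by
      apply h φ hφ
      intro g hgG
      have hmem := hG g hgG φ hφ
      have habs : |eval φ g| < m i := by
        have : |eval φ g| ≤ 1 := by
          simp only [Set.mem_insert_iff, Set.mem_singleton_iff] at hmem
          rcases hmem with h1 | h1 | h1 <;> simp [h1]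
        linarith [hm i]
      exact Int.eq_zero_of_abs_lt_dvd (hg g hgG) habs
    simp [this]
  · intro h φ hφ hg
    have hdvd : ∀ i, m i ∣ eval φ S := fun i =>
      h i φ hφ (fun g hgG => (hg g hgG) ▸ dvd_zero _)
    have hprod : (∏ i, m i) ∣ eval φ S :=
      Finset.prod_dvd_of_coprime
        (fun i _ j _ hij => hcop i j hij) (fun i _ => hdvd i)
    exact Int.eq_zero_of_abs_lt_dvd hprod (hbound φ hφ)
end

section
/- Let C be a circuit with gate polynomial set G ⊆ Z[X] (each gate polynomial evaluating to an element of {-1,0,1} under Boolean assignments), let S ∈ Z[X] be a specification, and let m ≥ 2. If there exists a Boolean assignment φ that is a model of G modulo m with φ(S) ≢ 0 (mod m), then φ is a model of G over Z with φ(S) ≠ 0 in Z. -/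
open MvPolynomial

theorem stmt_16 {σ : Type*} (G : Set (MvPolynomial σ ℤ))
    (hG : ∀ g ∈ G, ∀ ψ : σ → ℤ, (∀ x, ψ x = 0 ∨ ψ x = 1) →
      eval ψ g ∈ ({-1, 0, 1} : Set ℤ))
    (S : MvPolynomial σ ℤ) (m : ℤ) (hm : 2 ≤ m)
    (φ : σ → ℤ) (hφ : ∀ x, φ x = 0 ∨ φ x = 1)
    (hmodel : ∀ g ∈ G, m ∣ eval φ g) (hS : ¬ m ∣ eval φ S) :
    (∀ g ∈ G, eval φ g = 0) ∧ eval φ S ≠ 0 := by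
  constructor
  · intro g hg
    have hv := hG g hg φ hφ
    have hd := hmodel g hg
    simp only [Set.mem_insert_iff, Set.mem_singleton_iff] at hv
    rcases hv with h | h | h
    · rw [h] at hd
      have := Int.le_of_dvd (by norm_num) (dvd_neg.mp hd)
      omega
    · exact h
    · rw [h] at hd
      have := Int.le_of_dvd (by norm_num) hd
      omega
  · intro h
    exact hS (h ▸ dvd_zero m)
end
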